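/- Let ω, κ_p, κ_s > 0 and fix y ∈ ℝ³. Let Φ(x,y) = (κ_s²/(4πω²))(e^{iκ_s‖x−y‖}/‖x−y‖) I + (1/(4πω²)) ∇_x∇_xᵀ[ e^{iκ_s‖x−y‖}/‖x−y‖ − e^{iκ_p‖x−y‖}/‖x−y‖ ]. Then there exist constants C > 0 and R₀ > 0 such that for all x ∈ ℝ³ with ‖x‖ ≥ R₀, writing x̂ = x/‖x‖, every entry of the matrix Φ(x,y) − [ (κ_p²/(4πω²)) (e^{iκ_p‖x‖}/‖x‖) x̂ x̂ᵀ e^{−iκ_p x̂·y} + (κ_s²/(4πω²)) (e^{iκ_s‖x‖}/‖x‖) (I − x̂ x̂ᵀ) e^{−iκ_s x̂·y} ] has modulus at most C/‖x‖². -/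

import Mathlib

open Real Metric

noncomputable section

/-- The Euclidean space `ℝ³`. -/
abbrev E3 := EuclideanSpace ℝ (Fin 3)

/-- Complex 3-vectors. -/
abbrev V3 := Fin 3 → ℂ

/-- The `j`-th standard basis vector of `ℝ³`. -/
def e3 (j : Fin 3) : E3 := EuclideanSpace.single j 1

/-- The `j`-th partial derivative of a scalar field `f : ℝ³ → ℂ`. -/
def pd (j : Fin 3) (f : E3 → ℂ) : E3 → ℂ := fun x => fderiv ℝ f x (e3 j)

/-- The componentwise Laplacian of a vector field `u : ℝ³ → ℂ³`. -/
def vecLap (u : E3 → V3) : E3 → V3 := fun x i => ∑ j, pd j (pd j (fun y => u y i)) x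

/-- The divergence `∇·u` of a vector field `u : ℝ³ → ℂ³`. -/
def divg (u : E3 → V3) : E3 → ℂ := fun x => ∑ j, pd j (fun y => u y j) x

/-- The gradient `∇f` of a scalar field `f : ℝ³ → ℂ`. -/
def grad (f : E3 → ℂ) : E3 → V3 := fun x j => pd j f x

/-- `u` satisfies the Navier equation `μ Δu + (λ+μ) ∇(∇·u) + ω² u = 0` at the point `x`. -/
def IsNavierSolutionAt (μ lam ω : ℝ) (u : E3 → V3) (x : E3) : Prop :=
  μ • vecLap u x + (lam + μ) • grad (divg u) x + ω ^ 2 • u x = 0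

/-- The kernel `g_κ(x) = e^{iκ‖x−y‖}/‖x−y‖`. -/
def gker (κ : ℝ) (y : E3) (x : E3) : ℂ :=
  Complex.exp (Complex.I * (κ : ℂ) * (‖x - y‖ : ℂ)) / ((‖x - y‖ : ℝ) : ℂ)

/-- The Kupradze fundamental solution
`Φ(x,y) = (κ_s²/(4πω²)) g_{κ_s}(x−y) I + (1/(4πω²)) Hess_x[g_{κ_s} − g_{κ_p}](x−y)`. -/
def PhiMat (ω κp κs : ℝ) (y x : E3) (j k : Fin 3) : ℂ :=
  ((κs ^ 2 / (4 * π * ω ^ 2) : ℝ) : ℂ) * gker κs y x * (if j = k then 1 else 0)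
    + ((1 / (4 * π * ω ^ 2) : ℝ) : ℂ)
      * pd j (pd k (fun z => gker κs y z - gker κp y z)) x

/-- The far-field approximation of the fundamental solution:
`(κ_p²/(4πω²)) (e^{iκ_p‖x‖}/‖x‖) x̂x̂ᵀ e^{−iκ_p x̂·y} + (κ_s²/(4πω²)) (e^{iκ_s‖x‖}/‖x‖) (I − x̂x̂ᵀ) e^{−iκ_s x̂·y}`. -/
def farApprox (ω κp κs : ℝ) (y x : E3) (j k : Fin 3) : ℂ :=
  ((κp ^ 2 / (4 * π * ω ^ 2) : ℝ) : ℂ)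
      * (Complex.exp (Complex.I * (κp : ℂ) * (‖x‖ : ℂ)) / ((‖x‖ : ℝ) : ℂ))
      * ((((‖x‖⁻¹ • x : E3) j : ℝ) : ℂ) * (((‖x‖⁻¹ • x : E3) k : ℝ) : ℂ))
      * Complex.exp (-Complex.I * (κp : ℂ) * ((inner ℝ (‖x‖⁻¹ • x : E3) y : ℝ) : ℂ))
    + ((κs ^ 2 / (4 * π * ω ^ 2) : ℝ) : ℂ)
      * (Complex.exp (Complex.I * (κs : ℂ) * (‖x‖ : ℂ)) / ((‖x‖ : ℝ) : ℂ))
      * ((if j = k then 1 else 0)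
          - (((‖x‖⁻¹ • x : E3) j : ℝ) : ℂ) * (((‖x‖⁻¹ • x : E3) k : ℝ) : ℂ))
      * Complex.exp (-Complex.I * (κs : ℂ) * ((inner ℝ (‖x‖⁻¹ • x : E3) y : ℝ) : ℂ))

/-! The Hessian of a radial function `f(‖x - y‖)` is `f''(r) n nᵀ + (f'(r)/r) (I - n nᵀ)` with
`r = ‖x - y‖`, `n = (x - y)/r`. For the spherical wave `f(r) = e^{iκr}/r` both `f'' + κ² f` and
`f'/r` are `O(r⁻²)`, so up to `O(‖x‖⁻²)` the Hessian term of `Φ` is `-κ² g_κ n nᵀ`, and `Φ`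
reduces to `(κ_p²/(4πω²)) g_p n nᵀ + (κ_s²/(4πω²)) g_s (I - n nᵀ)`. Finally
`‖x - y‖ = ‖x‖ - x̂·y + O(‖x‖⁻¹)` and `n = x̂ + O(‖x‖⁻¹)`, so replacing `g_κ` by
`e^{iκ‖x‖} e^{-iκ x̂·y}/‖x‖` and `n` by `x̂` costs another `O(‖x‖⁻²)`. -/

open Asymptotics Filter Bornology NormedSpace
open scoped RealInnerProductSpace Topology

section RadialCalculus

variable {E : Type*} [NormedAddCommGroup E] [InnerProductSpace ℝ E]

theorem hasFDerivAt_norm_sub {x y : E} (hxy : x ≠ y) :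
    HasFDerivAt (fun z => ‖z - y‖) (‖x - y‖⁻¹ • innerSL ℝ (x - y)) x := by
  have h := (hasFDerivAt_sub_const (x := x) y).norm_sq.sqrt
    (pow_ne_zero 2 (norm_ne_zero_iff.2 (sub_ne_zero.2 hxy)))
  simp only [Real.sqrt_sq (norm_nonneg _)] at h
  convert h using 1
  ext v
  simp
  field_simp

theorem fderiv_comp_norm_sub_apply {f : ℝ → ℂ} {f' : ℂ} {x y : E} (hxy : x ≠ y)
    (hf : HasDerivAt f f' ‖x - y‖) (v : E) :
    fderiv ℝ (fun z => f ‖z - y‖) x v = ((⟪x - y, v⟫ / ‖x - y‖ : ℝ) : ℂ) * f' := by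
  have h : HasFDerivAt (fun z => f ‖z - y‖) _ x :=
    hf.hasFDerivAt.comp x (hasFDerivAt_norm_sub hxy)
  rw [h.fderiv]
  simp [Complex.real_smul, inner_sub_left, div_eq_inv_mul]
  ring

theorem fderiv_fderiv_comp_norm_sub_apply {f f' : ℝ → ℂ} {f'' : ℂ} {x y : E} (hxy : x ≠ y)
    (hf : ∀ s > 0, HasDerivAt f (f' s) s) (hf' : HasDerivAt f' f'' ‖x - y‖) (v w : E) :
    fderiv ℝ (fun z => fderiv ℝ (fun z => f ‖z - y‖) z v) x w =
      ((⟪x - y, v⟫ / ‖x - y‖ : ℝ) : ℂ) * ((⟪x - y, w⟫ / ‖x - y‖ : ℝ) : ℂ)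
          * (f'' - f' ‖x - y‖ / ‖x - y‖)
        + ((⟪v, w⟫ : ℝ) : ℂ) * (f' ‖x - y‖ / ‖x - y‖) := by
  have hpos : 0 < ‖x - y‖ := norm_pos_iff.2 (sub_ne_zero.2 hxy)
  have hfirst : (fun z => fderiv ℝ (fun z => f ‖z - y‖) z v) =ᶠ[𝓝 x]
      fun z => ((⟪v, z - y⟫ : ℝ) : ℂ) * (f' ‖z - y‖ / ‖z - y‖) := by
    filter_upwards [isOpen_ne.mem_nhds hxy] with z hz
    rw [fderiv_comp_norm_sub_apply hz (hf _ (norm_pos_iff.2 (sub_ne_zero.2 hz))), real_inner_comm]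
    push_cast
    ring
  have hinner : HasFDerivAt (fun z => ((⟪v, z - y⟫ : ℝ) : ℂ))
      (Complex.ofRealCLM.comp (innerSL ℝ v)) x :=
    (Complex.ofRealCLM.comp (innerSL ℝ v)).hasFDerivAt.comp x (hasFDerivAt_sub_const y)
  have hquot : HasDerivAt (fun s : ℝ => f' s / s)
      ((f'' * ‖x - y‖ - f' ‖x - y‖ * 1) / (‖x - y‖ : ℂ) ^ 2) ‖x - y‖ :=
    hf'.div (hasDerivAt_id _).ofReal_comp (by exact_mod_cast hpos.ne')
  have hcomp := hquot.hasFDerivAt.comp x (hasFDerivAt_norm_sub hxy)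
  have h : HasFDerivAt (fun z => ((⟪v, z - y⟫ : ℝ) : ℂ) * (f' ‖z - y‖ / ‖z - y‖)) _ x :=
    hinner.mul hcomp
  rw [hfirst.fderiv_eq, h.fderiv]
  have : (‖x - y‖ : ℂ) ≠ 0 := by exact_mod_cast hpos.ne'
  simp [real_inner_comm v, inner_sub_left, inner_sub_right]
  field_simp

end RadialCalculus

section SphericalWave

def sphericalWave (κ s : ℝ) : ℂ := Complex.exp (Complex.I * κ * s) / s

def sphericalWaveDeriv (κ s : ℝ) : ℂ :=
  Complex.exp (Complex.I * κ * s) * (Complex.I * κ / s - 1 / s ^ 2)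

def sphericalWaveDeriv2 (κ s : ℝ) : ℂ :=
  Complex.exp (Complex.I * κ * s) * (-κ ^ 2 / s - 2 * Complex.I * κ / s ^ 2 + 2 / s ^ 3)

theorem hasDerivAt_exp_I_mul (κ s : ℝ) :
    HasDerivAt (fun s : ℝ => Complex.exp (Complex.I * κ * s))
      (Complex.exp (Complex.I * κ * s) * (Complex.I * κ)) s := by
  simpa using ((hasDerivAt_id s).ofReal_comp.const_mul (Complex.I * κ)).cexp

theorem hasDerivAt_sphericalWave (κ : ℝ) {s : ℝ} (hs : s ≠ 0) :
    HasDerivAt (sphericalWave κ) (sphericalWaveDeriv κ s) s := by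
  have hs' : (s : ℂ) ≠ 0 := by exact_mod_cast hs
  refine ((hasDerivAt_exp_I_mul κ s).div (hasDerivAt_id s).ofReal_comp hs').congr_deriv ?_
  simp only [sphericalWaveDeriv, id, Complex.ofReal_one]
  field_simp

theorem hasDerivAt_sphericalWaveDeriv (κ : ℝ) {s : ℝ} (hs : s ≠ 0) :
    HasDerivAt (sphericalWaveDeriv κ) (sphericalWaveDeriv2 κ s) s := by
  have hs' : (s : ℂ) ≠ 0 := by exact_mod_cast hs
  have hinv := (hasDerivAt_inv hs').comp_ofReal (z := s)
  have h := (hasDerivAt_exp_I_mul κ s).mul ((hinv.const_mul (Complex.I * κ)).sub (hinv.pow 2))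
  have hfun : sphericalWaveDeriv κ = fun t : ℝ =>
      Complex.exp (Complex.I * κ * t) * (Complex.I * κ * (t : ℂ)⁻¹ - ((t : ℂ)⁻¹) ^ 2) := by
    ext t
    simp only [sphericalWaveDeriv]
    ring
  rw [hfun]
  refine h.congr_deriv ?_
  simp only [sphericalWaveDeriv2, Pi.sub_apply, Pi.pow_apply, Nat.add_one_sub_one, pow_one]
  field_simp
  linear_combination ((s : ℂ) ^ 2 * κ ^ 2) * Complex.I_sq

theorem isBigO_exp_I_mul_inv_sq (κ : ℝ) (a b : ℂ) :
    (fun s : ℝ => Complex.exp (Complex.I * κ * s) * (a / s ^ 2 + b / s ^ 3))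
      =O[atTop] fun s => (s ^ 2)⁻¹ := by
  refine IsBigO.of_bound (‖a‖ + ‖b‖) ?_
  filter_upwards [eventually_ge_atTop 1] with s hs
  have hexp : ‖Complex.exp (Complex.I * κ * s)‖ = 1 := by
    rw [mul_assoc]
    exact_mod_cast Complex.norm_exp_I_mul_ofReal (κ * s)
  have hs0 : 0 < s := by linarith
  rw [norm_mul, hexp, one_mul, norm_inv, norm_pow, Real.norm_of_nonneg hs0.le]
  calc ‖a / s ^ 2 + b / s ^ 3‖ ≤ ‖a‖ / s ^ 2 + ‖b‖ / s ^ 3 := by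
        refine (norm_add_le _ _).trans_eq ?_
        simp [abs_of_pos hs0]
    _ ≤ ‖a‖ / s ^ 2 + ‖b‖ / s ^ 2 := by gcongr; norm_num
    _ = (‖a‖ + ‖b‖) * (s ^ 2)⁻¹ := by ring

theorem isBigO_sphericalWaveDeriv_div (κ : ℝ) :
    (fun s : ℝ => sphericalWaveDeriv κ s / s) =O[atTop] fun s => (s ^ 2)⁻¹ := by
  convert isBigO_exp_I_mul_inv_sq κ (Complex.I * κ) (-1) using 2 with s
  simp only [sphericalWaveDeriv]
  ring

theorem isBigO_sphericalWaveDeriv2_add (κ : ℝ) :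
    (fun s : ℝ => sphericalWaveDeriv2 κ s + κ ^ 2 * sphericalWave κ s)
      =O[atTop] fun s => (s ^ 2)⁻¹ := by
  convert isBigO_exp_I_mul_inv_sq κ (-2 * Complex.I * κ) 2 using 2 with s
  simp only [sphericalWaveDeriv2, sphericalWave]
  ring

end SphericalWave

section FarField

theorem norm_normalize_sub_normalize_le {V : Type*} [NormedAddCommGroup V] [NormedSpace ℝ V]
    (a : V) {b : V} (hb : b ≠ 0) : ‖normalize a - normalize b‖ ≤ 2 * ‖a - b‖ / ‖b‖ := by
  have hb' : 0 < ‖b‖ := norm_pos_iff.2 hb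
  have hsplit : normalize a - normalize b = ‖b‖⁻¹ • (a - b) + (‖a‖⁻¹ - ‖b‖⁻¹) • a := by
    simp only [NormedSpace.normalize]
    module
  have hsecond : ‖(‖a‖⁻¹ - ‖b‖⁻¹) • a‖ ≤ ‖a - b‖ / ‖b‖ := by
    rcases eq_or_ne a 0 with rfl | ha
    · simp only [smul_zero, norm_zero]
      positivity
    have ha' : 0 < ‖a‖ := norm_pos_iff.2 ha
    calc ‖(‖a‖⁻¹ - ‖b‖⁻¹) • a‖ = |‖b‖ - ‖a‖| / ‖b‖ := by
          rw [norm_smul, Real.norm_eq_abs, ← abs_norm a, ← abs_mul, ← abs_of_pos hb', ← abs_div,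
            abs_norm, abs_of_pos hb']
          congr 1
          field_simp
      _ ≤ ‖a - b‖ / ‖b‖ := by
          gcongr
          simpa [norm_sub_rev] using abs_norm_sub_norm_le b a
  calc ‖normalize a - normalize b‖ ≤ ‖‖b‖⁻¹ • (a - b)‖ + ‖(‖a‖⁻¹ - ‖b‖⁻¹) • a‖ :=
        hsplit ▸ norm_add_le _ _
    _ ≤ ‖a - b‖ / ‖b‖ + ‖a - b‖ / ‖b‖ := by
        gcongr
        rw [norm_smul, norm_inv, norm_norm, inv_mul_eq_div]
    _ = 2 * ‖a - b‖ / ‖b‖ := by ring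

theorem norm_exp_I_mul_sub_exp_I_mul_le (a b : ℝ) :
    ‖Complex.exp (Complex.I * a) - Complex.exp (Complex.I * b)‖ ≤ |a - b| := by
  have h : Complex.exp (Complex.I * a) - Complex.exp (Complex.I * b)
      = Complex.exp (Complex.I * b) * (Complex.exp (Complex.I * (a - b : ℝ)) - 1) := by
    rw [mul_sub, mul_one, ← Complex.exp_add]
    push_cast
    ring_nf
  rw [h, norm_mul, Complex.norm_exp_I_mul_ofReal, one_mul, ← Real.norm_eq_abs]
  exact Real.norm_exp_I_mul_ofReal_sub_one_le

variable {E : Type*} [NormedAddCommGroup E] [InnerProductSpace ℝ E]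

theorem abs_norm_sub_sub_le {x y : E} (hyx : ‖y‖ < ‖x‖) :
    |‖x - y‖ - (‖x‖ - ⟪normalize x, y⟫)| ≤ ‖y‖ ^ 2 / ‖x - y‖ := by
  have hR : 0 < ‖x‖ := (norm_nonneg y).trans_lt hyx
  have hr : 0 < ‖x - y‖ := norm_pos_iff.2 (sub_ne_zero.2 (fun h => hyx.ne (h ▸ rfl)))
  set t := ⟪normalize x, y⟫
  have ht : |t| ≤ ‖y‖ := by
    have h := abs_real_inner_le_norm (normalize x) y
    rwa [NormedSpace.norm_normalize_eq_one_iff.2 (norm_pos_iff.1 hR), one_mul] at h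
  have hxy : ⟪x, y⟫ = ‖x‖ * t := by
    simp only [t, NormedSpace.normalize, real_inner_smul_left]
    field_simp
  have hsq : ‖x - y‖ ^ 2 - (‖x‖ - t) ^ 2 = ‖y‖ ^ 2 - t ^ 2 := by
    rw [norm_sub_sq_real, hxy]
    ring
  have hts : t ^ 2 ≤ ‖y‖ ^ 2 := sq_le_sq' (abs_le.1 ht).1 (abs_le.1 ht).2
  have hst : 0 ≤ ‖x‖ - t := by linarith [(abs_le.1 ht).2]
  have hle : ‖x‖ - t ≤ ‖x - y‖ := by nlinarith
  rw [abs_of_nonneg (by linarith), le_div_iff₀ hr]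
  nlinarith

def farFieldWave (κ : ℝ) (y x : E) : ℂ :=
  Complex.exp (Complex.I * κ * ‖x‖) / ‖x‖ * Complex.exp (-Complex.I * κ * ⟪normalize x, y⟫)

theorem norm_sphericalWave_sub_farFieldWave_le (κ : ℝ) {x y : E} (h : 2 * ‖y‖ < ‖x‖) :
    ‖sphericalWave κ ‖x - y‖ - farFieldWave κ y x‖
      ≤ (4 * |κ| * ‖y‖ ^ 2 + 2 * ‖y‖) / ‖x‖ ^ 2 := by
  have hRr : |‖x‖ - ‖x - y‖| ≤ ‖y‖ := by simpa using abs_norm_sub_norm_le x (x - y)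
  have hR : 0 < ‖x‖ := by linarith [norm_nonneg y]
  have hr : ‖x‖ / 2 ≤ ‖x - y‖ := by linarith [(abs_le.1 hRr).2]
  have hphase := abs_norm_sub_sub_le (x := x) (y := y) (by linarith [norm_nonneg y])
  set r := ‖x - y‖
  set R := ‖x‖ with hR_def
  set s := R - ⟪normalize x, y⟫
  have hr0 : 0 < r := by linarith
  have hsplit : sphericalWave κ r - farFieldWave κ y x
      = (Complex.exp (Complex.I * (κ * r : ℝ)) - Complex.exp (Complex.I * (κ * s : ℝ))) / r
        + Complex.exp (Complex.I * (κ * s : ℝ)) * ((r : ℂ)⁻¹ - (R : ℂ)⁻¹) := by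
    rw [sphericalWave, farFieldWave, div_mul_eq_mul_div, ← Complex.exp_add, ← hR_def]
    simp only [s]
    push_cast
    ring_nf
  have hinv : ‖(r : ℂ)⁻¹ - (R : ℂ)⁻¹‖ = |R - r| / (r * R) := by
    rw [← Complex.ofReal_inv, ← Complex.ofReal_inv, ← Complex.ofReal_sub, Complex.norm_real,
      Real.norm_eq_abs, inv_sub_inv hr0.ne' hR.ne', abs_div, abs_of_pos (by positivity : 0 < r * R)]
  calc ‖sphericalWave κ r - farFieldWave κ y x‖
      ≤ |κ * r - κ * s| / r + |R - r| / (r * R) := by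
        rw [hsplit]
        refine (norm_add_le _ _).trans ?_
        rw [norm_div, norm_mul, Complex.norm_exp_I_mul_ofReal, one_mul, hinv, Complex.norm_real,
          Real.norm_of_nonneg hr0.le]
        gcongr
        exact norm_exp_I_mul_sub_exp_I_mul_le _ _
    _ ≤ |κ| * (‖y‖ ^ 2 / r) / r + ‖y‖ / (r * R) := by
        rw [← mul_sub, abs_mul]
        gcongr
    _ = |κ| * ‖y‖ ^ 2 / r ^ 2 + ‖y‖ / (r * R) := by ring
    _ ≤ |κ| * ‖y‖ ^ 2 / (R / 2) ^ 2 + ‖y‖ / (R / 2 * R) := by gcongr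
    _ = (4 * |κ| * ‖y‖ ^ 2 + 2 * ‖y‖) / R ^ 2 := by field_simp; ring

end FarField

section Decay

theorem Asymptotics.IsBigO.bounded_mul {α : Type*} {l : Filter α} {f g : α → ℂ} {u : α → ℝ}
    {C : ℝ} (hf : f =O[l] u) (hg : ∀ x, ‖g x‖ ≤ C) : (fun x => g x * f x) =O[l] u := by
  have hg' : g =O[l] fun _ => (1 : ℝ) :=
    IsBigO.of_bound C (Eventually.of_forall fun x => by simpa using hg x)
  simpa using hg'.mul hf

section SeminormedAddCommGroup

variable {E : Type*} [SeminormedAddCommGroup E]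

theorem eventually_two_mul_norm_lt (y : E) : ∀ᶠ x in cobounded E, 2 * ‖y‖ < ‖x‖ :=
  tendsto_norm_cobounded_atTop.eventually_gt_atTop _

theorem tendsto_norm_sub_cobounded_atTop (y : E) :
    Tendsto (fun x => ‖x - y‖) (cobounded E) atTop :=
  tendsto_norm_atTop_iff_cobounded.2 (tendsto_sub_const_cobounded y)

theorem isBigO_inv_sq_norm_sub (y : E) :
    (fun x => (‖x - y‖ ^ 2)⁻¹) =O[cobounded E] fun x => (‖x‖ ^ 2)⁻¹ := by
  refine IsBigO.of_bound 4 ?_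
  filter_upwards [eventually_two_mul_norm_lt y] with x hx
  have hx' : ‖x‖ / 2 ≤ ‖x - y‖ := by linarith [norm_sub_norm_le x y]
  have hx0 : 0 < ‖x‖ / 2 := by linarith [norm_nonneg y]
  rw [norm_inv, norm_inv, norm_pow, norm_pow, norm_norm, norm_norm]
  calc (‖x - y‖ ^ 2)⁻¹ ≤ ((‖x‖ / 2) ^ 2)⁻¹ := by gcongr
    _ = 4 * (‖x‖ ^ 2)⁻¹ := by ring

theorem isBigO_comp_norm_sub {f : ℝ → ℂ} (hf : f =O[atTop] fun s => (s ^ 2)⁻¹) (y : E) :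
    (fun x => f ‖x - y‖) =O[cobounded E] fun x => (‖x‖ ^ 2)⁻¹ :=
  (hf.comp_tendsto (tendsto_norm_sub_cobounded_atTop y)).trans (isBigO_inv_sq_norm_sub y)

end SeminormedAddCommGroup

section NormedSpace

variable {E : Type*} [NormedAddCommGroup E] [NormedSpace ℝ E]

theorem isBigO_normalize_sub_sub_normalize (y : E) :
    (fun x => normalize (x - y) - normalize x) =O[cobounded E] fun x => ‖x‖⁻¹ := by
  refine IsBigO.of_bound (2 * ‖y‖) ?_
  filter_upwards [eventually_two_mul_norm_lt y] with x hx
  have hx0 : x ≠ 0 := norm_pos_iff.1 (by linarith [norm_nonneg y])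
  simpa [div_eq_mul_inv, mul_assoc] using norm_normalize_sub_normalize_le (x - y) hx0

end NormedSpace

section InnerProductSpace

variable {E : Type*} [NormedAddCommGroup E] [InnerProductSpace ℝ E]

theorem isBigO_sphericalWave_sub_farFieldWave (κ : ℝ) (y : E) :
    (fun x => sphericalWave κ ‖x - y‖ - farFieldWave κ y x) =O[cobounded E]
      fun x => (‖x‖ ^ 2)⁻¹ := by
  refine IsBigO.of_bound (4 * |κ| * ‖y‖ ^ 2 + 2 * ‖y‖) ?_
  filter_upwards [eventually_two_mul_norm_lt y] with x hx
  simpa [div_eq_mul_inv] using norm_sphericalWave_sub_farFieldWave_le κ hx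

theorem norm_farFieldWave (κ : ℝ) (y x : E) : ‖farFieldWave κ y x‖ = ‖x‖⁻¹ := by
  simp [farFieldWave, Complex.norm_exp, Complex.mul_re]

theorem isBigO_farFieldWave (κ : ℝ) (y : E) :
    farFieldWave κ y =O[cobounded E] fun x => ‖x‖⁻¹ :=
  isBigO_of_le _ fun x => by simp [norm_farFieldWave]

end InnerProductSpace

end Decay

section Kupradze

theorem norm_ofReal_apply_le (v : E3) (i : Fin 3) : ‖((v i : ℝ) : ℂ)‖ ≤ ‖v‖ := by
  simpa using PiLp.norm_apply_le v i

theorem norm_ofReal_normalize_apply_le_one (v : E3) (i : Fin 3) :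
    ‖((normalize v i : ℝ) : ℂ)‖ ≤ 1 := by
  refine (norm_ofReal_apply_le _ i).trans ?_
  rcases eq_or_ne v 0 with rfl | hv
  · simp
  · exact (NormedSpace.norm_normalize_eq_one_iff.2 hv).le

theorem isBigO_normalize_sub_sub_normalize_apply (y : E3) (i : Fin 3) :
    (fun x => ((normalize (x - y) i : ℝ) : ℂ) - (normalize x i : ℂ))
      =O[cobounded E3] fun x => ‖x‖⁻¹ :=
  (IsBigO.of_bound 1 (Eventually.of_forall fun x => by
    simpa using norm_ofReal_apply_le (normalize (x - y) - normalize x) i)).trans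
    (isBigO_normalize_sub_sub_normalize y)

theorem pd_pd_comp_norm_sub {f f' : ℝ → ℂ} {f'' : ℂ} {x y : E3} (hxy : x ≠ y)
    (hf : ∀ s > 0, HasDerivAt f (f' s) s) (hf' : HasDerivAt f' f'' ‖x - y‖) (j k : Fin 3) :
    pd j (pd k (fun z => f ‖z - y‖)) x =
      (normalize (x - y) j : ℂ) * (normalize (x - y) k : ℂ) * (f'' - f' ‖x - y‖ / ‖x - y‖)
        + (if j = k then 1 else 0) * (f' ‖x - y‖ / ‖x - y‖) := by
  refine (fderiv_fderiv_comp_norm_sub_apply hxy hf hf' (e3 k) (e3 j)).trans ?_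
  simp only [e3, NormedSpace.normalize, EuclideanSpace.inner_single_right, PiLp.smul_apply,
    smul_eq_mul, PiLp.single_apply, conj_trivial]
  split_ifs <;> push_cast <;> ring

theorem pd_pd_gker (κ : ℝ) {x y : E3} (hxy : x ≠ y) (j k : Fin 3) :
    pd j (pd k (gker κ y)) x =
      (normalize (x - y) j : ℂ) * (normalize (x - y) k : ℂ)
          * (sphericalWaveDeriv2 κ ‖x - y‖ - sphericalWaveDeriv κ ‖x - y‖ / ‖x - y‖)
        + (if j = k then 1 else 0) * (sphericalWaveDeriv κ ‖x - y‖ / ‖x - y‖) :=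
  pd_pd_comp_norm_sub hxy (fun _ hs => hasDerivAt_sphericalWave κ hs.ne')
    (hasDerivAt_sphericalWaveDeriv κ (norm_pos_iff.2 (sub_ne_zero.2 hxy)).ne') j k

theorem pd_pd_gker_sub (κp κs : ℝ) {x y : E3} (hxy : x ≠ y) (j k : Fin 3) :
    pd j (pd k (fun z => gker κs y z - gker κp y z)) x
      = pd j (pd k (gker κs y)) x - pd j (pd k (gker κp y)) x := by
  have hr : ‖x - y‖ ≠ 0 := (norm_pos_iff.2 (sub_ne_zero.2 hxy)).ne'
  refine (pd_pd_comp_norm_sub (f := fun s => sphericalWave κs s - sphericalWave κp s) hxy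
    (fun _ hs => (hasDerivAt_sphericalWave κs hs.ne').sub (hasDerivAt_sphericalWave κp hs.ne'))
    ((hasDerivAt_sphericalWaveDeriv κs hr).sub (hasDerivAt_sphericalWaveDeriv κp hr)) j k).trans ?_
  rw [pd_pd_gker κs hxy, pd_pd_gker κp hxy]
  ring

theorem isBigO_pd_pd_gker_add_farFieldWave (κ : ℝ) (y : E3) (j k : Fin 3) :
    (fun x => pd j (pd k (gker κ y)) x
        + κ ^ 2 * farFieldWave κ y x * (normalize x j : ℂ) * (normalize x k : ℂ))
      =O[cobounded E3] fun x => (‖x‖ ^ 2)⁻¹ := by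
  set N : Fin 3 → E3 → ℂ := fun i x => (normalize (x - y) i : ℂ)
  set X : Fin 3 → E3 → ℂ := fun i x => (normalize x i : ℂ)
  set F : E3 → ℂ := farFieldWave κ y
  set W : E3 → ℂ := fun x => sphericalWave κ ‖x - y‖ - F x
  set D : E3 → ℂ := fun x => sphericalWaveDeriv κ ‖x - y‖ / ‖x - y‖
  set T : E3 → ℂ := fun x =>
    sphericalWaveDeriv2 κ ‖x - y‖ + κ ^ 2 * sphericalWave κ ‖x - y‖ - D x
  have hN (i : Fin 3) (x : E3) : ‖N i x‖ ≤ 1 := norm_ofReal_normalize_apply_le_one _ i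
  have hX (i : Fin 3) (x : E3) : ‖X i x‖ ≤ 1 := norm_ofReal_normalize_apply_le_one _ i
  have hNX := isBigO_normalize_sub_sub_normalize_apply y
  have hD : D =O[cobounded E3] fun x => (‖x‖ ^ 2)⁻¹ :=
    isBigO_comp_norm_sub (isBigO_sphericalWaveDeriv_div κ) y
  have hT : T =O[cobounded E3] fun x => (‖x‖ ^ 2)⁻¹ :=
    (isBigO_comp_norm_sub (isBigO_sphericalWaveDeriv2_add κ) y).sub hD
  have hW : W =O[cobounded E3] fun x => (‖x‖ ^ 2)⁻¹ := isBigO_sphericalWave_sub_farFieldWave κ y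
  have hFNX : (fun x => F x * (N k x * (N j x - X j x) + X j x * (N k x - X k x)))
      =O[cobounded E3] fun x => (‖x‖ ^ 2)⁻¹ :=
    ((isBigO_farFieldWave κ y).mul (((hNX j).bounded_mul (hN k)).add
      ((hNX k).bounded_mul (hX j)))).congr_right fun x => by ring
  -- `f'' = -κ² f + T + D` for the spherical wave `f`; `f n nᵀ - F x̂ x̂ᵀ` is split factor by factor
  have hev : (fun x => pd j (pd k (gker κ y)) x + κ ^ 2 * F x * X j x * X k x)
      =ᶠ[cobounded E3] fun x => N j x * (N k x * T x) + (if j = k then 1 else 0) * D x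
        - κ ^ 2 * (N j x * (N k x * W x)
          + F x * (N k x * (N j x - X j x) + X j x * (N k x - X k x))) := by
    filter_upwards [eventually_ne_cobounded y] with x hx
    rw [pd_pd_gker κ hx]
    ring
  refine IsBigO.congr' ?_ hev.symm EventuallyEq.rfl
  exact (((hT.bounded_mul (hN k)).bounded_mul (hN j)).add (hD.const_mul_left _)).sub
    ((((hW.bounded_mul (hN k)).bounded_mul (hN j)).add hFNX).const_mul_left _)

theorem isBigO_phiMat_sub_farApprox (ω κp κs : ℝ) (y : E3) (j k : Fin 3) :
    (fun x => PhiMat ω κp κs y x j k - farApprox ω κp κs y x j k)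
      =O[cobounded E3] fun x => (‖x‖ ^ 2)⁻¹ := by
  set H : ℝ → E3 → ℂ := fun κ x => pd j (pd k (gker κ y)) x
    + κ ^ 2 * farFieldWave κ y x * (normalize x j : ℂ) * (normalize x k : ℂ)
  have hev : (fun x => PhiMat ω κp κs y x j k - farApprox ω κp κs y x j k)
      =ᶠ[cobounded E3] fun x =>
        ((κs ^ 2 / (4 * π * ω ^ 2) : ℝ) : ℂ) * (if j = k then 1 else 0)
            * (sphericalWave κs ‖x - y‖ - farFieldWave κs y x)
          + ((1 / (4 * π * ω ^ 2) : ℝ) : ℂ) * (H κs x - H κp x) := by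
    filter_upwards [eventually_ne_cobounded y] with x hx
    rw [PhiMat, farApprox, pd_pd_gker_sub κp κs hx]
    simp only [H, farFieldWave, gker, sphericalWave, NormedSpace.normalize]
    push_cast
    ring
  refine IsBigO.congr' ?_ hev.symm EventuallyEq.rfl
  exact ((isBigO_sphericalWave_sub_farFieldWave κs y).const_mul_left _).add
    (((isBigO_pd_pd_gker_add_farFieldWave κs y j k).sub
      (isBigO_pd_pd_gker_add_farFieldWave κp y j k)).const_mul_left _)

end Kupradze

theorem stmt_13_general (ω κp κs : ℝ) (y : E3) :
    ∃ C > (0 : ℝ), ∃ R₀ > (0 : ℝ), ∀ x : E3, R₀ ≤ ‖x‖ → ∀ j k : Fin 3,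
      ‖PhiMat ω κp κs y x j k - farApprox ω κp κs y x j k‖ ≤ C / ‖x‖ ^ 2 := by
  set M : E3 → Fin 3 → Fin 3 → ℂ := fun x j k => PhiMat ω κp κs y x j k - farApprox ω κp κs y x j k
  have hM : M =O[cobounded E3] fun x => (‖x‖ ^ 2)⁻¹ := by
    simp only [M, isBigO_pi]
    exact isBigO_phiMat_sub_farApprox ω κp κs y
  obtain ⟨C, hC, hbound⟩ := hM.exists_pos
  obtain ⟨R₀, -, hR₀⟩ := hasBasis_cobounded_norm.eventually_iff.1 hbound.bound
  refine ⟨C, hC, max R₀ 1, by positivity, fun x hx j k => ?_⟩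
  calc ‖M x j k‖ ≤ ‖M x‖ := (norm_le_pi_norm (M x j) k).trans (norm_le_pi_norm (M x) j)
    _ ≤ C * ‖(‖x‖ ^ 2)⁻¹‖ := hR₀ (le_of_max_le_left hx)
    _ = C / ‖x‖ ^ 2 := by simp [div_eq_mul_inv]

/-- Asymptotics of the fundamental solution: every entry of `Φ(x,y)` minus its far-field
approximation is `O(1/‖x‖²)` as `‖x‖ → ∞`. -/
theorem stmt_13 (ω κp κs : ℝ) (hω : 0 < ω) (hκp : 0 < κp) (hκs : 0 < κs) (y : E3) :
    ∃ C > (0 : ℝ), ∃ R₀ > (0 : ℝ), ∀ x : E3, R₀ ≤ ‖x‖ → ∀ j k : Fin 3,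
      ‖PhiMat ω κp κs y x j k - farApprox ω κp κs y x j k‖ ≤ C / ‖x‖ ^ 2 :=
  stmt_13_general ω κp κs y
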